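/- Let A be an m×n real matrix, c ∈ ℝⁿ, b ∈ ℝ^m, and consider the right-hand-side-parametrized linear program with feasible set {x ∈ ℝⁿ : A x ≤ b + y} for y ∈ ℝ^m. Suppose μ ∈ ℝ^m satisfies μ ≥ 0 componentwise and Aᵀ μ = −c (dual feasibility), and suppose x̄ ∈ ℝⁿ and ȳ ∈ ℝ^m satisfy A x̄ ≤ b + ȳ and c·x̄ = −μ·(b + ȳ) (zero duality gap at ȳ). Then for every y ∈ ℝ^m and every x ∈ ℝⁿ with A x ≤ b + y, one has c·x ≥ c·x̄ − μ·(y − ȳ). In other words, the Benders optimality cut generated from the dual solution at ȳ is a valid global lower bound on the parametric value function. -/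
import Mathlib

open Matrix

/-- Validity of the Benders optimality cut: if `μ ≥ 0` is dual feasible
(`Aᵀ μ = −c`) and `(x̄, ȳ)` exhibits zero duality gap (`A x̄ ≤ b + ȳ` and
`c·x̄ = −μ·(b + ȳ)`), then for every parameter `y` and every feasible `x`
(`A x ≤ b + y`) we have `c·x ≥ c·x̄ − μ·(y − ȳ)`: the cut generated from the
dual solution at `ȳ` globally underestimates the parametric value function. -/
theorem benders_cut_validity
    {m n : ℕ} (A : Matrix (Fin m) (Fin n) ℝ) (c : Fin n → ℝ) (b : Fin m → ℝ)
    (μ : Fin m → ℝ) (hμ_nonneg : ∀ i, 0 ≤ μ i)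
    (hdual : A.transpose.mulVec μ = -c)
    (xbar : Fin n → ℝ) (ybar : Fin m → ℝ)
    (hfeas : A.mulVec xbar ≤ b + ybar)
    (hgap : c ⬝ᵥ xbar = -(μ ⬝ᵥ (b + ybar))) :
    ∀ (y : Fin m → ℝ) (x : Fin n → ℝ), A.mulVec x ≤ b + y →
      c ⬝ᵥ x ≥ c ⬝ᵥ xbar - μ ⬝ᵥ (y - ybar) := by
  intro y x hx
  have hc : c ⬝ᵥ x = -(μ ⬝ᵥ A.mulVec x) := by
    have : (A.transpose.mulVec μ) ⬝ᵥ x = -c ⬝ᵥ x := by rw [hdual]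
    rw [Matrix.mulVec_transpose, ← Matrix.dotProduct_mulVec,
      neg_dotProduct] at this
    linarith [this]
  have hle : μ ⬝ᵥ A.mulVec x ≤ μ ⬝ᵥ (b + y) := by
    apply Finset.sum_le_sum
    intro i _
    exact mul_le_mul_of_nonneg_left (hx i) (hμ_nonneg i)
  have hrhs : c ⬝ᵥ xbar - μ ⬝ᵥ (y - ybar) = -(μ ⬝ᵥ (b + y)) := by
    rw [hgap]
    simp [dotProduct_add, dotProduct_sub]
    ring
  rw [hc, hrhs]
  exact neg_le_neg hle
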